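/- Let K be a field and (u_k)_{k≥0} a sequence in K satisfying a linear recurrence of order d with monic characteristic polynomial P, where d is minimal (no nonzero polynomial of degree < d annihilates the sequence). Then the Hankel determinant det(u_{i+j-2})_{1≤i,j≤d} is nonzero. -/

import Mathlib

/-!
A nonzero kernel vector `b` of the Hankel matrix says that the windowed combination
`k ↦ ∑ j, b j * u (k + (d - 1 - j))` vanishes for `k < d`. Being a combination of shifts of `u`,
this sequence satisfies the same recurrence of order `d`, hence vanishes identically, contradicting
minimality.
-/

namespace LinearRecurrence

section CommSemiring

variable {R : Type*} [CommSemiring R] {E : LinearRecurrence R} {u : ℕ → R}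

theorem IsSolution.comp_add_right (hu : E.IsSolution u) (m : ℕ) :
    E.IsSolution fun n => u (n + m) := fun n => by
  simpa only [add_right_comm] using hu (n + m)

theorem IsSolution.sum_mul_comp_add {ι : Type*} (s : Finset ι) (hu : E.IsSolution u)
    (b : ι → R) (m : ι → ℕ) : E.IsSolution fun n => ∑ i ∈ s, b i * u (n + m i) := by
  have hmem : ∑ i ∈ s, b i • (fun n => u (n + m i)) ∈ E.solSpace :=
    E.solSpace.sum_mem fun i _ => E.solSpace.smul_mem (b i) (hu.comp_add_right (m i))
  rw [E.is_sol_iff_mem_solSpace]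
  convert hmem using 1
  ext n
  simp only [Finset.sum_apply, Pi.smul_apply, smul_eq_mul]

theorem IsSolution.eq_zero_of_forall_lt_order (hu : E.IsSolution u)
    (h : ∀ n < E.order, u n = 0) : u = 0 :=
  (E.eq_iff_eqOn_range_order u 0 hu E.solSpace.zero_mem).2 fun n hn =>
    h n (Finset.mem_range.1 hn)

end CommSemiring

theorem isSolution_of_add_sum_eq_zero {R : Type*} [CommRing R] {d : ℕ} {u : ℕ → R}
    {a : Fin d → R}
    (h : ∀ k, u (k + d) + ∑ i : Fin d, a i * u (k + (d - 1 - i.val)) = 0) :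
    (LinearRecurrence.mk d fun i => -a i.rev).IsSolution u := fun n => by
  rw [eq_neg_of_add_eq_zero_left (h n), ← Equiv.sum_comp Fin.revPerm, ← Finset.sum_neg_distrib]
  refine Finset.sum_congr rfl fun i _ => ?_
  simp only [Fin.revPerm_apply, Fin.val_rev, neg_mul]
  congr 4
  omega

end LinearRecurrence

theorem Matrix.hankel_mulVec {R : Type*} [CommSemiring R] {d : ℕ} (u : ℕ → R) (b : Fin d → R) :
    (Matrix.of fun i j : Fin d => u (d + i.val - j.val - 1)).mulVec b =
      fun i : Fin d => ∑ j, b j * u (i + (d - 1 - j.val)) := by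
  ext i
  simp only [Matrix.mulVec, dotProduct, Matrix.of_apply]
  refine Finset.sum_congr rfl fun j _ => ?_
  rw [mul_comm]
  congr 2
  omega

theorem hankel_det_ne_zero_of_minimal_recurrence_general
    (K : Type*) [Field K] (d : ℕ)
    (u : ℕ → K) (a : Fin d → K)
    (hrec : ∀ k : ℕ, u (k + d) + ∑ i : Fin d, a i * u (k + (d - 1 - i.val)) = 0)
    (hmin : ∀ b : Fin d → K, b ≠ 0 →
      ∃ k : ℕ, ∑ i : Fin d, b i * u (k + (d - 1 - i.val)) ≠ 0) :
    (Matrix.of fun i j : Fin d => u (d + i.val - j.val - 1)).det ≠ 0 := by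
  intro hdet
  obtain ⟨b, hb, hker⟩ := Matrix.exists_mulVec_eq_zero_iff.2 hdet
  rw [Matrix.hankel_mulVec] at hker
  have hwindow : (fun k => ∑ j : Fin d, b j * u (k + (d - 1 - j.val))) = 0 :=
    ((LinearRecurrence.isSolution_of_add_sum_eq_zero hrec).sum_mul_comp_add _ b _)
      |>.eq_zero_of_forall_lt_order fun k hk => congrFun hker ⟨k, hk⟩
  obtain ⟨k, hk⟩ := hmin b hb
  exact hk (congrFun hwindow k)

/-- If a sequence satisfies a monic linear recurrence of order `d`
and no nonzero vector of length `d` gives a linear relation among shifted windows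
of the sequence (minimality of the order), then the `d × d` Hankel matrix
`(u_{d+i-j-1})` has nonzero determinant. -/
theorem hankel_det_ne_zero_of_minimal_recurrence
    (K : Type*) [Field K] (d : ℕ) (hd : 0 < d)
    (u : ℕ → K) (a : Fin d → K)
    (hrec : ∀ k : ℕ, u (k + d) + ∑ i : Fin d, a i * u (k + (d - 1 - i.val)) = 0)
    (hmin : ∀ b : Fin d → K, b ≠ 0 →
      ∃ k : ℕ, ∑ i : Fin d, b i * u (k + (d - 1 - i.val)) ≠ 0) :
    (Matrix.of fun i j : Fin d => u (d + i.val - j.val - 1)).det ≠ 0 :=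
  hankel_det_ne_zero_of_minimal_recurrence_general K d u a hrec hmin
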